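/- With the data E₀, E₁, π₀, π₁, U, T₀, T₁, N₀, N₁ and V(T₀,T₁) as in the context, and assuming moreover π₀(N₀) ⊆ T₀ and π₁(N₁) ⊆ T₁: V(T₀,T₁)^⊥ equals the set of pairs (λ̃, φ̃) ∈ W(E₀) for which there exists a continuously differentiable map b : [0,1] → E₀* with b(0) ∈ N₀, Uᵀ(b(1)) ∈ N₁, λ̃(u) = π₀(b(u)) for all u ∈ [0,1], and φ̃(u) = −b'(u) for all u ∈ [0,1]. -/

import Mathlib

open MeasureTheory Set

/-- An element of `W(E)`: a pair `(λ, φ)` of continuous maps on `[0,1]` with values in `E`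
and in the dual `E* = E →L[ℝ] ℝ` respectively. -/
structure WPair (E : Type*) [NormedAddCommGroup E] [NormedSpace ℝ E] where
  lam : ℝ → E
  phi : ℝ → E →L[ℝ] ℝ
  lam_cont : ContinuousOn lam (Icc 0 1)
  phi_cont : ContinuousOn phi (Icc 0 1)

/-- The alternating bilinear form `Ω((λ,φ),(λ',φ')) = ∫₀¹ (φ(u)(λ'(u)) − φ'(u)(λ(u))) du`. -/
noncomputable def Omega {E : Type*} [NormedAddCommGroup E] [NormedSpace ℝ E]
    (w w' : WPair E) : ℝ :=
  ∫ u in (0:ℝ)..(1:ℝ), (w.phi u (w'.lam u) - w'.phi u (w.lam u))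

/-- The `Ω`-orthogonal of a subset of `W(E)`. -/
def orth {E : Type*} [NormedAddCommGroup E] [NormedSpace ℝ E] (A : Set (WPair E)) :
    Set (WPair E) :=
  {w | ∀ a ∈ A, Omega a w = 0}

/-- The annihilator `N = { α ∈ E* : α vanishes on T }` of a subspace `T ⊆ E`. -/
def Ann {E : Type*} [NormedAddCommGroup E] [NormedSpace ℝ E] (T : Submodule ℝ E) :
    Set (E →L[ℝ] ℝ) :=
  {α | ∀ v ∈ T, α v = 0}

/-- The space `V(T₀,T₁)` of solutions `(λ,φ)` of `λ(u) = λ(0) − π₀ ∫₀ᵘ φ` with boundary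
conditions `λ(0) ∈ T₀` and `U⁻¹(λ(1)) ∈ T₁`. -/
noncomputable def VSet {E₀ E₁ : Type*}
    [NormedAddCommGroup E₀] [NormedSpace ℝ E₀]
    [NormedAddCommGroup E₁] [NormedSpace ℝ E₁]
    (π₀ : (E₀ →L[ℝ] ℝ) →ₗ[ℝ] E₀) (U : E₁ ≃L[ℝ] E₀)
    (T₀ : Submodule ℝ E₀) (T₁ : Submodule ℝ E₁) : Set (WPair E₀) :=
  {w | (∀ u ∈ Icc (0:ℝ) 1, w.lam u = w.lam 0 - π₀ (∫ s in (0:ℝ)..u, w.phi s)) ∧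
       w.lam 0 ∈ T₀ ∧ U.symm (w.lam 1) ∈ T₁}

/-!
Write `B(u) = ∫₀ᵘ φ̃` for `w = (λ̃, φ̃)`. For a solution `a = (x₀ - π₀ ∫₀ᵘ p, p)` of the evolution
equation, integrating `B(a.λ)` by parts and using the skew-symmetry of `π₀` gives
`Ω(a, w) = ∫₀¹ p(u)(λ̃(u) + π₀ B(u)) du - B(1)(a.λ(1))`.
Testing against solutions with `x₀ = 0` and `∫₀¹ p = 0` shows, by the du Bois-Reymond lemma,
that `λ̃ + π₀ B` is the constant `λ̃(0)`; testing against `p ≡ α` leaves a finite-dimensional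
linear condition on `(λ̃(0), B(1))`, which by duality produces `c ∈ E₀*` with `π₀ c = λ̃(0)`,
`c ∈ N₀` and `c = B(1)` on `U(T₁)`. Then `b = c - B`. Conversely, if `w = (π₀ b, -b')` then
`Ω(a, w) = b(1)(a.λ(1)) - b(0)(a.λ(0)) = 0` by the same integration by parts.
-/

open intervalIntegral Topology

section Calculus

variable {E F : Type*} [NormedAddCommGroup E] [NormedSpace ℝ E]
  [NormedAddCommGroup F] [NormedSpace ℝ F] [CompleteSpace F] {a b : ℝ}

theorem hasDerivWithinAt_integral_Icc {f : ℝ → F} (hf : ContinuousOn f (Icc a b)) {u : ℝ}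
    (hu : u ∈ Icc a b) :
    HasDerivWithinAt (fun v => ∫ s in a..v, f s) (f u) (Icc a b) u := by
  have : Fact (u ∈ Icc a b) := ⟨hu⟩
  exact integral_hasDerivWithinAt_right
    ((hf.mono (uIcc_subset_Icc (left_mem_Icc.2 (hu.1.trans hu.2)) hu)).intervalIntegrable)
    (hf.stronglyMeasurableAtFilter_nhdsWithin measurableSet_Icc u) (hf u hu)

theorem integral_deriv_apply_add_apply_deriv_eq_sub {β β' : ℝ → E →L[ℝ] ℝ} {ℓ ℓ' : ℝ → E}
    (hab : a ≤ b)
    (hβ : ∀ u ∈ Icc a b, HasDerivWithinAt β (β' u) (Icc a b) u)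
    (hℓ : ∀ u ∈ Icc a b, HasDerivWithinAt ℓ (ℓ' u) (Icc a b) u)
    (hβ' : ContinuousOn β' (Icc a b)) (hℓ' : ContinuousOn ℓ' (Icc a b)) :
    ∫ u in a..b, (β' u (ℓ u) + β u (ℓ' u)) = β b (ℓ b) - β a (ℓ a) := by
  have hβc : ContinuousOn β (Icc a b) := fun u hu => (hβ u hu).continuousWithinAt
  have hℓc : ContinuousOn ℓ (Icc a b) := fun u hu => (hℓ u hu).continuousWithinAt
  refine integral_eq_sub_of_hasDeriv_right_of_le hab (hβc.clm_apply hℓc) (fun u hu => ?_)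
    (((hβ'.clm_apply hℓc).add (hβc.clm_apply hℓ')).intervalIntegrable_of_Icc hab)
  have hu' : Icc a b ∈ 𝓝 u := Icc_mem_nhds hu.1 hu.2
  exact (((hβ u (Ioo_subset_Icc_self hu)).hasDerivAt hu').clm_apply
    ((hℓ u (Ioo_subset_Icc_self hu)).hasDerivAt hu')).hasDerivWithinAt

theorem eqOn_of_forall_integral_mul_eq_zero {f : ℝ → ℝ} (hab : a < b)
    (hf : ContinuousOn f (Icc a b))
    (h : ∀ ρ : ℝ → ℝ, ContinuousOn ρ (Icc a b) → ∫ u in a..b, ρ u = 0 →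
      ∫ u in a..b, ρ u * f u = 0) :
    EqOn f (fun _ => f a) (Icc a b) := by
  set c := (b - a)⁻¹ * ∫ u in a..b, f u with hc
  have hρ : ContinuousOn (fun u => f u - c) (Icc a b) := hf.sub continuousOn_const
  have hfi : IntervalIntegrable f volume a b := hf.intervalIntegrable_of_Icc hab.le
  have hρ_mean : ∫ u in a..b, (f u - c) = 0 := by
    rw [integral_sub hfi intervalIntegrable_const, intervalIntegral.integral_const, smul_eq_mul, hc,
      mul_inv_cancel_left₀ (sub_ne_zero.2 hab.ne'), sub_self]
  have hsq : ∫ u in a..b, (f u - c) * (f u - c) = 0 := by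
    have hsplit : ∀ u, (f u - c) * (f u - c) = (f u - c) * f u - c * (f u - c) := fun u => by ring
    simp_rw [hsplit]
    rw [integral_sub (f := fun u => (f u - c) * f u) (g := fun u => c * (f u - c))
      ((hρ.mul hf).intervalIntegrable_of_Icc hab.le)
      ((continuousOn_const.mul hρ).intervalIntegrable_of_Icc hab.le),
      intervalIntegral.integral_const_mul, h _ hρ hρ_mean, hρ_mean, mul_zero, sub_zero]
  have hρ_zero : ∀ u ∈ Icc a b, f u - c = 0 := by
    intro u hu
    by_contra hne
    exact (integral_pos hab (hρ.mul hρ) (fun v _ => mul_self_nonneg _)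
      ⟨u, hu, mul_self_pos.2 hne⟩).ne' hsq
  intro u hu
  linarith [hρ_zero u hu, hρ_zero a (left_mem_Icc.2 hab.le)]

theorem eqOn_of_forall_integral_apply_eq_zero {μ : ℝ → E} (hab : a < b)
    (hμ : ContinuousOn μ (Icc a b))
    (h : ∀ p : ℝ → E →L[ℝ] ℝ, ContinuousOn p (Icc a b) → ∫ u in a..b, p u = 0 →
      ∫ u in a..b, p u (μ u) = 0) :
    EqOn μ (fun _ => μ a) (Icc a b) := by
  intro u hu
  refine (SeparatingDual.eq_iff_forall_dual_eq (R := ℝ)).2 fun α => ?_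
  refine eqOn_of_forall_integral_mul_eq_zero hab (α.continuous.comp_continuousOn hμ)
    (fun ρ hρ hρ_mean => ?_) hu
  simpa using h (fun u => ρ u • α) (hρ.smul continuousOn_const)
    (by rw [intervalIntegral.integral_smul_const, hρ_mean, zero_smul])

end Calculus

section LinearAlgebra

variable {E : Type*} [NormedAddCommGroup E] [NormedSpace ℝ E] [FiniteDimensional ℝ E]

theorem exists_dual_of_skew (π : (E →L[ℝ] ℝ) →ₗ[ℝ] E)
    (hπ : ∀ α β : E →L[ℝ] ℝ, α (π β) = - β (π α)) (S₀ S₁ : Submodule ℝ E) (ν : E)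
    (β : E →L[ℝ] ℝ) (h : ∀ x ∈ S₀, ∀ α : E →L[ℝ] ℝ, x - π α ∈ S₁ → α (ν - π β) = β x) :
    ∃ c : E →L[ℝ] ℝ, π c = ν ∧ (∀ x ∈ S₀, c x = 0) ∧ ∀ x ∈ S₁, c x = β x := by
  -- `c ∘ K = ℓ` says that `c` vanishes on `S₀`, agrees with `β` on `S₁` and has `π c = ν`;
  -- it is solvable because the compatibility condition `h` says that `ℓ` kills `ker K`.
  let K : (E →L[ℝ] ℝ) × S₀ × S₁ →ₗ[ℝ] E := π.coprod (S₀.subtype.coprod S₁.subtype)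
  let ℓ : Module.Dual ℝ ((E →L[ℝ] ℝ) × S₀ × S₁) :=
    (-(ContinuousLinearMap.apply ℝ ℝ ν).toLinearMap).coprod
      ((0 : Module.Dual ℝ S₀).coprod ((β : E →ₗ[ℝ] ℝ).comp S₁.subtype))
  have hℓ : ℓ ∈ LinearMap.range K.dualMap := by
    rw [LinearMap.range_dualMap_eq_dualAnnihilator_ker, Submodule.mem_dualAnnihilator]
    rintro ⟨α, s₀, s₁⟩ hK
    have hπα : π α = -(s₀ + s₁ : E) :=
      eq_neg_of_add_eq_zero_left (by simpa [K, add_assoc] using hK)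
    have hs : (s₀ : E) - π (-α) ∈ S₁ := by
      rw [map_neg, sub_neg_eq_add, hπα, neg_add, add_neg_cancel_left]
      exact S₁.neg_mem s₁.2
    have h₀ := h s₀ s₀.2 (-α) hs
    have hαβ := hπ α β
    rw [hπα, map_neg, map_add] at hαβ
    simp only [neg_apply, map_sub] at h₀
    simp only [ℓ, LinearMap.coprod_apply, LinearMap.neg_apply, ContinuousLinearMap.coe_coe,
      ContinuousLinearMap.apply_apply, LinearMap.zero_apply, LinearMap.comp_apply,
      Submodule.subtype_apply, zero_add]
    linear_combination h₀ - hαβ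
  obtain ⟨c, hc⟩ := hℓ
  have hcK : ∀ z, c (K z) = ℓ z := fun z => LinearMap.congr_fun hc z
  refine ⟨LinearMap.toContinuousLinearMap c, ?_, fun x hx => ?_, fun x hx => ?_⟩
  · refine (SeparatingDual.eq_iff_forall_dual_eq (R := ℝ)).2 fun α => ?_
    have := hcK (α, 0, 0)
    simp only [K, ℓ, LinearMap.coprod_apply, map_zero, add_zero] at this
    rw [hπ, LinearMap.coe_toContinuousLinearMap', this]
    simp
  · simpa [K, ℓ] using hcK (0, ⟨x, hx⟩, 0)
  · simpa [K, ℓ] using hcK (0, 0, ⟨x, hx⟩)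

end LinearAlgebra

section Characteristic

variable {E₀ E₁ : Type*} [NormedAddCommGroup E₀] [NormedSpace ℝ E₀] [FiniteDimensional ℝ E₀]
  [NormedAddCommGroup E₁] [NormedSpace ℝ E₁] (π₀ : (E₀ →L[ℝ] ℝ) →ₗ[ℝ] E₀)

theorem hasDerivWithinAt_sub_map_integral {a b : ℝ} {p : ℝ → E₀ →L[ℝ] ℝ}
    (hp : ContinuousOn p (Icc a b)) (x₀ : E₀) {u : ℝ} (hu : u ∈ Icc a b) :
    HasDerivWithinAt (fun v => x₀ - π₀ (∫ s in a..v, p s)) (-π₀ (p u)) (Icc a b) u :=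
  ((LinearMap.toContinuousLinearMap π₀).hasFDerivAt.comp_hasDerivWithinAt u
    (hasDerivWithinAt_integral_Icc hp hu)).const_sub x₀

noncomputable def WPair.solution (x₀ : E₀) (p : ℝ → E₀ →L[ℝ] ℝ)
    (hp : ContinuousOn p (Icc 0 1)) : WPair E₀ where
  lam u := x₀ - π₀ (∫ s in (0:ℝ)..u, p s)
  phi := p
  lam_cont _ hu := (hasDerivWithinAt_sub_map_integral π₀ hp x₀ hu).continuousWithinAt
  phi_cont := hp

theorem WPair.solution_mem_VSet {x₀ : E₀} {p : ℝ → E₀ →L[ℝ] ℝ} (hp : ContinuousOn p (Icc 0 1))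
    (U : E₁ ≃L[ℝ] E₀) {T₀ : Submodule ℝ E₀} {T₁ : Submodule ℝ E₁} (hx₀ : x₀ ∈ T₀)
    (h₁ : U.symm (x₀ - π₀ (∫ u in (0:ℝ)..1, p u)) ∈ T₁) :
    solution π₀ x₀ p hp ∈ VSet π₀ U T₀ T₁ := by
  have h₀ : (solution π₀ x₀ p hp).lam 0 = x₀ := by simp [solution]
  exact ⟨fun _ _ => by rw [h₀]; rfl, by rw [h₀]; exact hx₀, h₁⟩

theorem Omega_solution (hskew₀ : ∀ α β : E₀ →L[ℝ] ℝ, α (π₀ β) = - β (π₀ α)) (x₀ : E₀)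
    {p : ℝ → E₀ →L[ℝ] ℝ} (hp : ContinuousOn p (Icc 0 1)) (w : WPair E₀) :
    Omega (WPair.solution π₀ x₀ p hp) w =
      (∫ u in (0:ℝ)..1, p u (w.lam u + π₀ (∫ s in (0:ℝ)..u, w.phi s))) -
        (∫ u in (0:ℝ)..1, w.phi u) (x₀ - π₀ (∫ u in (0:ℝ)..1, p u)) := by
  set B : ℝ → E₀ →L[ℝ] ℝ := fun u => ∫ s in (0:ℝ)..u, w.phi s
  set ℓ := (WPair.solution π₀ x₀ p hp).lam
  have hπ₀ : Continuous π₀ := LinearMap.continuous_of_finiteDimensional π₀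
  have hB : ∀ u ∈ Icc (0:ℝ) 1, HasDerivWithinAt B (w.phi u) (Icc 0 1) u :=
    fun u hu => hasDerivWithinAt_integral_Icc w.phi_cont hu
  have hBc : ContinuousOn B (Icc 0 1) := fun u hu => (hB u hu).continuousWithinAt
  have hℓ : ContinuousOn ℓ (Icc 0 1) := (WPair.solution π₀ x₀ p hp).lam_cont
  have hπp : ContinuousOn (fun u => -π₀ (p u)) (Icc 0 1) := (hπ₀.comp_continuousOn hp).neg
  have hibp : ∫ u in (0:ℝ)..1, (w.phi u (ℓ u) + B u (-π₀ (p u))) = B 1 (ℓ 1) - B 0 (ℓ 0) :=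
    integral_deriv_apply_add_apply_deriv_eq_sub zero_le_one hB
      (fun u hu => hasDerivWithinAt_sub_map_integral π₀ hp x₀ hu) w.phi_cont hπp
  have hsplit : ∀ u, p u (w.lam u) - w.phi u (ℓ u) =
      p u (w.lam u + π₀ (B u)) - (w.phi u (ℓ u) + B u (-π₀ (p u))) := fun u => by
    rw [map_neg, hskew₀ (B u), map_add]
    ring
  have hi₁ : IntervalIntegrable (fun u => p u (w.lam u + π₀ (B u))) volume 0 1 :=
    (hp.clm_apply (w.lam_cont.add (hπ₀.comp_continuousOn hBc))).intervalIntegrable_of_Icc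
      zero_le_one
  have hi₂ : IntervalIntegrable (fun u => w.phi u (ℓ u) + B u (-π₀ (p u))) volume 0 1 :=
    ((w.phi_cont.clm_apply hℓ).add (hBc.clm_apply hπp)).intervalIntegrable_of_Icc zero_le_one
  change ∫ u in (0:ℝ)..1, (p u (w.lam u) - w.phi u (ℓ u)) = _
  rw [integral_congr fun u _ => hsplit u, integral_sub hi₁ hi₂,
    hibp, show B 0 = 0 from integral_same, zero_apply, sub_zero]
  rfl

theorem integral_apply_eq_of_mem_orth_VSet
    (hskew₀ : ∀ α β : E₀ →L[ℝ] ℝ, α (π₀ β) = - β (π₀ α)) {U : E₁ ≃L[ℝ] E₀}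
    {T₀ : Submodule ℝ E₀} {T₁ : Submodule ℝ E₁} {w : WPair E₀}
    (hw : w ∈ orth (VSet π₀ U T₀ T₁)) {x₀ : E₀} (hx₀ : x₀ ∈ T₀) {p : ℝ → E₀ →L[ℝ] ℝ}
    (hp : ContinuousOn p (Icc 0 1)) (h₁ : U.symm (x₀ - π₀ (∫ u in (0:ℝ)..1, p u)) ∈ T₁) :
    ∫ u in (0:ℝ)..1, p u (w.lam u + π₀ (∫ s in (0:ℝ)..u, w.phi s)) =
      (∫ u in (0:ℝ)..1, w.phi u) (x₀ - π₀ (∫ u in (0:ℝ)..1, p u)) :=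
  sub_eq_zero.1 <| (Omega_solution π₀ hskew₀ x₀ hp w).symm.trans <|
    hw _ (WPair.solution_mem_VSet π₀ hp U hx₀ h₁)

theorem lam_add_map_integral_phi_eq_of_mem_orth_VSet
    (hskew₀ : ∀ α β : E₀ →L[ℝ] ℝ, α (π₀ β) = - β (π₀ α)) {U : E₁ ≃L[ℝ] E₀}
    {T₀ : Submodule ℝ E₀} {T₁ : Submodule ℝ E₁} {w : WPair E₀}
    (hw : w ∈ orth (VSet π₀ U T₀ T₁)) {u : ℝ} (hu : u ∈ Icc (0:ℝ) 1) :
    w.lam u + π₀ (∫ s in (0:ℝ)..u, w.phi s) = w.lam 0 := by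
  have hμ : ContinuousOn (fun u => w.lam u + π₀ (∫ s in (0:ℝ)..u, w.phi s)) (Icc 0 1) :=
    w.lam_cont.add ((LinearMap.continuous_of_finiteDimensional π₀).comp_continuousOn
      fun u hu => (hasDerivWithinAt_integral_Icc w.phi_cont hu).continuousWithinAt)
  have h := eqOn_of_forall_integral_apply_eq_zero zero_lt_one hμ fun p hp hp₀ => by
    simpa [hp₀] using
      integral_apply_eq_of_mem_orth_VSet π₀ hskew₀ hw T₀.zero_mem hp (by simp [hp₀])
  simpa using h hu

theorem exists_symmetry_of_mem_orth_VSet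
    (hskew₀ : ∀ α β : E₀ →L[ℝ] ℝ, α (π₀ β) = - β (π₀ α)) (U : E₁ ≃L[ℝ] E₀)
    (T₀ : Submodule ℝ E₀) (T₁ : Submodule ℝ E₁) {w : WPair E₀}
    (hw : w ∈ orth (VSet π₀ U T₀ T₁)) :
    ∃ b b' : ℝ → (E₀ →L[ℝ] ℝ),
      ContinuousOn b' (Icc 0 1) ∧
      (∀ u ∈ Icc (0:ℝ) 1, HasDerivWithinAt b (b' u) (Icc 0 1) u) ∧
      b 0 ∈ Ann T₀ ∧ (b 1).comp (U : E₁ →L[ℝ] E₀) ∈ Ann T₁ ∧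
      (∀ u ∈ Icc (0:ℝ) 1, w.lam u = π₀ (b u)) ∧
      (∀ u ∈ Icc (0:ℝ) 1, w.phi u = - b' u) := by
  set B : ℝ → E₀ →L[ℝ] ℝ := fun u => ∫ s in (0:ℝ)..u, w.phi s
  have hB : ∀ u ∈ Icc (0:ℝ) 1, HasDerivWithinAt B (w.phi u) (Icc 0 1) u :=
    fun u hu => hasDerivWithinAt_integral_Icc w.phi_cont hu
  have hconst : ∀ u ∈ Icc (0:ℝ) 1, w.lam u + π₀ (B u) = w.lam 0 :=
    fun u hu => lam_add_map_integral_phi_eq_of_mem_orth_VSet π₀ hskew₀ hw hu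
  set S₁ := T₁.map (U.toLinearEquiv : E₁ →ₗ[ℝ] E₀)
  have hbdry : ∀ x ∈ T₀, ∀ α : E₀ →L[ℝ] ℝ, x - π₀ α ∈ S₁ → α (w.lam 0 - π₀ (B 1)) = B 1 x := by
    intro x hx α hα
    have h := integral_apply_eq_of_mem_orth_VSet π₀ hskew₀ hw hx (p := fun _ => α)
      continuousOn_const (by simpa [S₁, Submodule.mem_map_equiv] using hα)
    have hint : ∫ u in (0:ℝ)..1, α (w.lam u + π₀ (B u)) = α (w.lam 0) := by
      rw [integral_congr (g := fun _ => α (w.lam 0)) fun u hu => by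
        rw [uIcc_of_le zero_le_one] at hu; rw [hconst u hu]]
      simp
    rw [hint, intervalIntegral.integral_const, sub_zero, one_smul] at h
    rw [map_sub, hskew₀ α (B 1), h, map_sub]
    ring
  obtain ⟨c, hc, hc₀, hc₁⟩ := exists_dual_of_skew π₀ hskew₀ T₀ S₁ (w.lam 0) (B 1) hbdry
  refine ⟨fun u => c - B u, fun u => -w.phi u, w.phi_cont.neg,
    fun u hu => (hB u hu).const_sub c, fun x hx => ?_, fun x hx => ?_,
    fun u hu => ?_, fun u _ => (neg_neg _).symm⟩
  · simpa [B] using hc₀ x hx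
  · simpa [sub_eq_zero] using hc₁ _ (Submodule.mem_map_of_mem hx)
  · rw [map_sub, hc, ← hconst u hu, add_sub_cancel_right]

theorem mem_orth_VSet_of_symmetry
    (hskew₀ : ∀ α β : E₀ →L[ℝ] ℝ, α (π₀ β) = - β (π₀ α)) (U : E₁ ≃L[ℝ] E₀)
    (T₀ : Submodule ℝ E₀) (T₁ : Submodule ℝ E₁) {w : WPair E₀} {b b' : ℝ → E₀ →L[ℝ] ℝ}
    (hb' : ContinuousOn b' (Icc 0 1))
    (hb : ∀ u ∈ Icc (0:ℝ) 1, HasDerivWithinAt b (b' u) (Icc 0 1) u)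
    (hb₀ : b 0 ∈ Ann T₀) (hb₁ : (b 1).comp (U : E₁ →L[ℝ] E₀) ∈ Ann T₁)
    (hlam : ∀ u ∈ Icc (0:ℝ) 1, w.lam u = π₀ (b u))
    (hphi : ∀ u ∈ Icc (0:ℝ) 1, w.phi u = - b' u) :
    w ∈ orth (VSet π₀ U T₀ T₁) := by
  rintro a ⟨ha, ha₀, ha₁⟩
  have hℓ : ∀ u ∈ Icc (0:ℝ) 1, HasDerivWithinAt a.lam (-π₀ (a.phi u)) (Icc 0 1) u :=
    fun u hu => (hasDerivWithinAt_sub_map_integral π₀ a.phi_cont (a.lam 0) hu).congr ha (ha u hu)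
  have hibp := integral_deriv_apply_add_apply_deriv_eq_sub zero_le_one hb hℓ hb'
    ((LinearMap.continuous_of_finiteDimensional π₀).comp_continuousOn a.phi_cont).neg
  calc Omega a w = ∫ u in (0:ℝ)..1, (b' u (a.lam u) + b u (-π₀ (a.phi u))) := by
        refine integral_congr fun u hu => ?_
        rw [uIcc_of_le zero_le_one] at hu
        rw [hlam u hu, hphi u hu, hskew₀, map_neg, neg_apply]
        ring
    _ = b 1 (a.lam 1) - b 0 (a.lam 0) := hibp
    _ = 0 := by
      rw [hb₀ _ ha₀, ← U.apply_symm_apply (a.lam 1)]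
      simpa using hb₁ _ ha₁

end Characteristic

theorem orth_VSet_eq_symmetries_general
    (E₀ E₁ : Type*)
    [NormedAddCommGroup E₀] [NormedSpace ℝ E₀] [FiniteDimensional ℝ E₀]
    [NormedAddCommGroup E₁] [NormedSpace ℝ E₁]
    (π₀ : (E₀ →L[ℝ] ℝ) →ₗ[ℝ] E₀)
    (hskew₀ : ∀ α β : E₀ →L[ℝ] ℝ, α (π₀ β) = - β (π₀ α))
    (U : E₁ ≃L[ℝ] E₀)
    (T₀ : Submodule ℝ E₀) (T₁ : Submodule ℝ E₁) :
    orth (VSet π₀ U T₀ T₁) =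
      {w : WPair E₀ | ∃ b b' : ℝ → (E₀ →L[ℝ] ℝ),
        ContinuousOn b' (Icc 0 1) ∧
        (∀ u ∈ Icc (0:ℝ) 1, HasDerivWithinAt b (b' u) (Icc 0 1) u) ∧
        b 0 ∈ Ann T₀ ∧ (b 1).comp (U : E₁ →L[ℝ] E₀) ∈ Ann T₁ ∧
        (∀ u ∈ Icc (0:ℝ) 1, w.lam u = π₀ (b u)) ∧
        (∀ u ∈ Icc (0:ℝ) 1, w.phi u = - b' u)} := by
  ext w
  refine ⟨exists_symmetry_of_mem_orth_VSet π₀ hskew₀ U T₀ T₁, ?_⟩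
  rintro ⟨b, b', hb', hb, hb₀, hb₁, hlam, hphi⟩
  exact mem_orth_VSet_of_symmetry π₀ hskew₀ U T₀ T₁ hb' hb hb₀ hb₁ hlam hphi

theorem orth_VSet_eq_symmetries
    (E₀ E₁ : Type*)
    [NormedAddCommGroup E₀] [NormedSpace ℝ E₀] [FiniteDimensional ℝ E₀]
    [NormedAddCommGroup E₁] [NormedSpace ℝ E₁] [FiniteDimensional ℝ E₁]
    (π₀ : (E₀ →L[ℝ] ℝ) →ₗ[ℝ] E₀) (π₁ : (E₁ →L[ℝ] ℝ) →ₗ[ℝ] E₁)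
    (hskew₀ : ∀ α β : E₀ →L[ℝ] ℝ, α (π₀ β) = - β (π₀ α))
    (hskew₁ : ∀ α β : E₁ →L[ℝ] ℝ, α (π₁ β) = - β (π₁ α))
    (U : E₁ ≃L[ℝ] E₀)
    (hU : ∀ α : E₀ →L[ℝ] ℝ, U (π₁ (α.comp (U : E₁ →L[ℝ] E₀))) = π₀ α)
    (T₀ : Submodule ℝ E₀) (T₁ : Submodule ℝ E₁)
    (hT₀ : ∀ α ∈ Ann T₀, π₀ α ∈ T₀) (hT₁ : ∀ α ∈ Ann T₁, π₁ α ∈ T₁) :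
    orth (VSet π₀ U T₀ T₁) =
      {w : WPair E₀ | ∃ b b' : ℝ → (E₀ →L[ℝ] ℝ),
        ContinuousOn b' (Icc 0 1) ∧
        (∀ u ∈ Icc (0:ℝ) 1, HasDerivWithinAt b (b' u) (Icc 0 1) u) ∧
        b 0 ∈ Ann T₀ ∧ (b 1).comp (U : E₁ →L[ℝ] E₀) ∈ Ann T₁ ∧
        (∀ u ∈ Icc (0:ℝ) 1, w.lam u = π₀ (b u)) ∧
        (∀ u ∈ Icc (0:ℝ) 1, w.phi u = - b' u)} :=
  orth_VSet_eq_symmetries_general E₀ E₁ π₀ hskew₀ U T₀ T₁
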